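/- Let W be the n × k matrix whose columns are v_1,...,v_k. If the quadratic program min_z (1/2) zᵀ Wᵀ W z subject to z_i ≥ 1 for all i has optimal value 0, and W has rank n, then {v_1,...,v_k} positively spans ℝ^n. -/

import Mathlib

/-
Proof idea: a feasible point `z ≥ 1` of value `0` satisfies `W z = 0`, i.e. `∑ zᵢ vᵢ = 0` with all
coefficients positive. Full rank makes `W` surjective, so any `w` equals `W y` for some `y`, and then
`w = W (y + t z)` for every `t`; taking `t = ‖y‖` (sup norm) makes all coefficients `y + t z`
nonnegative.
-/

open scoped BigOperators Matrix

/-- Positive span of the columns of a matrix (as vectors in `Fin n → ℝ`). -/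
def PSpanCols {n k : ℕ} (W : Matrix (Fin n) (Fin k) ℝ) : Set (Fin n → ℝ) :=
  {w | ∃ l : Fin k → ℝ, (∀ i, 0 ≤ l i) ∧ ∑ i, l i • (fun j => W j i) = w}

namespace Matrix

variable {m ι : Type*} [Fintype m] [Fintype ι]

theorem mulVec_surjective_of_rank_eq_card (W : Matrix m ι ℝ) (hrank : W.rank = Fintype.card m) :
    Function.Surjective W.mulVec := by
  have hrange : LinearMap.range W.mulVecLin = ⊤ :=
    Submodule.eq_top_of_finrank_eq (by rw [← Matrix.rank, hrank, Module.finrank_fintype_fun_eq_card])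
  exact LinearMap.range_eq_top.mp hrange

theorem exists_mulVec_eq_zero_of_isLeast_zero (W : Matrix m ι ℝ)
    (hopt : IsLeast {c : ℝ | ∃ z : ι → ℝ, (∀ i, (1 : ℝ) ≤ z i) ∧
      c = (1 / 2) * (W.mulVec z ⬝ᵥ W.mulVec z)} 0) :
    ∃ z : ι → ℝ, (∀ i, 1 ≤ z i) ∧ W.mulVec z = 0 := by
  obtain ⟨⟨z, hz, hval⟩, -⟩ := hopt
  exact ⟨z, hz, dotProduct_self_eq_zero.mp (by linarith)⟩

end Matrix

theorem nonneg_add_norm_smul {ι : Type*} [Fintype ι] (y z : ι → ℝ) (hz : ∀ i, 1 ≤ z i) :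
    0 ≤ y + ‖y‖ • z := by
  intro i
  have hy : -y i ≤ ‖y‖ := (neg_le_abs (y i)).trans (norm_le_pi_norm y i)
  have hyz : ‖y‖ ≤ ‖y‖ * z i := le_mul_of_one_le_right (norm_nonneg y) (hz i)
  simp only [Pi.zero_apply, Pi.add_apply, Pi.smul_apply, smul_eq_mul]
  linarith

theorem mem_PSpanCols_iff {n k : ℕ} (W : Matrix (Fin n) (Fin k) ℝ) (w : Fin n → ℝ) :
    w ∈ PSpanCols W ↔ ∃ l : Fin k → ℝ, 0 ≤ l ∧ W.mulVec l = w := by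
  have hcols : ∀ l : Fin k → ℝ, ∑ i, l i • (fun j => W j i) = W.mulVec l := fun l => by
    ext j
    simp [Finset.sum_apply, Matrix.mulVec, dotProduct, mul_comm]
  simp only [PSpanCols, Set.mem_ofPred_eq, hcols, Pi.le_def, Pi.zero_apply]

theorem qp_optimal_value_zero_rank_full_implies_positive_span
    {n k : ℕ} (W : Matrix (Fin n) (Fin k) ℝ)
    (hopt : IsLeast
      {c : ℝ | ∃ z : Fin k → ℝ, (∀ i, (1 : ℝ) ≤ z i) ∧
        c = (1 / 2) * (W.mulVec z ⬝ᵥ W.mulVec z)} 0)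
    (hrank : W.rank = n) :
    PSpanCols W = Set.univ := by
  obtain ⟨z, hz, hWz⟩ := W.exists_mulVec_eq_zero_of_isLeast_zero hopt
  have hsurj := W.mulVec_surjective_of_rank_eq_card (by rw [hrank, Fintype.card_fin])
  refine Set.eq_univ_of_forall fun w => (mem_PSpanCols_iff W w).2 ?_
  obtain ⟨y, rfl⟩ := hsurj w
  refine ⟨y + ‖y‖ • z, nonneg_add_norm_smul y z hz, ?_⟩
  rw [Matrix.mulVec_add, Matrix.mulVec_smul, hWz, smul_zero, add_zero]
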